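/- arXiv:1509.05819 — 5 statements merged into one kernel-verified Lean document; each statement's English description precedes it below -/
import Mathlib

section
/- The three kernels ker ρ₀, ker ρ₁, ker ρ₂ are pairwise distinct normal subgroups of F₂. (These are the subgroups corresponding to the regular covers of the three Galois-conjugate dessins ℋ₀, ℋ₁, ℋ₂.) -/
open Equiv

/-- σ₀ = (1 2 3 7 8 9)(6 12); the point 12 is represented by `0 : Fin 12`. -/
def σ₀ : Equiv.Perm (Fin 12) := c[1, 2, 3, 7, 8, 9] * c[6, 0]

/-- σ₁ = (1 2 3 7 8 9)(4 10). -/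
def σ₁ : Equiv.Perm (Fin 12) := c[1, 2, 3, 7, 8, 9] * c[4, 10]

/-- σ₂ = (1 2 3 7 8 9)(5 11). -/
def σ₂ : Equiv.Perm (Fin 12) := c[1, 2, 3, 7, 8, 9] * c[5, 11]

/-- τ = (1 4)(2 5)(7 10)(8 11)(3 6 9 12); the point 12 is represented by `0 : Fin 12`. -/
def τ : Equiv.Perm (Fin 12) := c[1, 4] * c[2, 5] * c[7, 10] * c[8, 11] * c[3, 6, 9, 0]

def σ : Fin 3 → Equiv.Perm (Fin 12) := ![σ₀, σ₁, σ₂]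

/-- The generator x of the free group F₂. -/
def x : FreeGroup (Fin 2) := FreeGroup.of 0

/-- The generator y of the free group F₂. -/
def y : FreeGroup (Fin 2) := FreeGroup.of 1

/-- ρᵢ : F₂ → S₁₂ is determined by ρᵢ(x) = σᵢ and ρᵢ(y) = τ. -/
def ρ (i : Fin 3) : FreeGroup (Fin 2) →* Equiv.Perm (Fin 12) := FreeGroup.lift ![σ i, τ]


lemma ρ_x (i : Fin 3) : ρ i x = σ i := by
  simp [ρ, x]

lemma ρ_y (i : Fin 3) : ρ i y = τ := by
  simp [ρ, y]

/-- w01 separates ker ρ0 from ker ρ1 and ker ρ2 -/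
def w01 : FreeGroup (Fin 2) := x * y * x * y * x⁻¹ * y * x⁻¹ * y

/-- w12 separates ker ρ2 from ker ρ1 -/
def w12 : FreeGroup (Fin 2) := x * x * y * x * y⁻¹ * x * y * x⁻¹ * y

lemma ρ_w01 (i : Fin 3) :
    ρ i w01 = σ i * τ * σ i * τ * (σ i)⁻¹ * τ * (σ i)⁻¹ * τ := by
  simp [w01, map_mul, map_inv, ρ_x, ρ_y]

lemma ρ_w12 (i : Fin 3) :
    ρ i w12 = σ i * σ i * τ * σ i * τ⁻¹ * σ i * τ * (σ i)⁻¹ * τ := by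
  simp [w12, map_mul, map_inv, ρ_x, ρ_y]

set_option maxRecDepth 4000 in
/-- The kernels ker ρ₀, ker ρ₁, ker ρ₂ are pairwise distinct normal subgroups of F₂. -/
theorem stmt_4 :
    (∀ i : Fin 3, ((ρ i).ker).Normal) ∧
      (ρ 0).ker ≠ (ρ 1).ker ∧ (ρ 0).ker ≠ (ρ 2).ker ∧ (ρ 1).ker ≠ (ρ 2).ker := by
  refine ⟨fun i => MonoidHom.normal_ker _, ?_, ?_, ?_⟩
  · intro h
    have h0 : w01 ∈ (ρ 0).ker := by
      rw [MonoidHom.mem_ker, ρ_w01]; decide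
    rw [h, MonoidHom.mem_ker, ρ_w01] at h0
    revert h0; decide
  · intro h
    have h0 : w01 ∈ (ρ 0).ker := by
      rw [MonoidHom.mem_ker, ρ_w01]; decide
    rw [h, MonoidHom.mem_ker, ρ_w01] at h0
    revert h0; decide
  · intro h
    have h0 : w12 ∈ (ρ 2).ker := by
      rw [MonoidHom.mem_ker, ρ_w12]; decide
    rw [← h, MonoidHom.mem_ker, ρ_w12] at h0
    revert h0; decide
end

section
/- The kernel of ρ_F equals the normal closure in F₂ of the three elements x³, y², and the commutator [x, y⁻¹xy] = x⁻¹(y⁻¹xy)⁻¹x(y⁻¹xy); moreover this kernel has index 18 in F₂ (equivalently, the image of ρ_F has order 18). -/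
/-!
The image of `ρF` is the wreath product `C₃ ≀ C₂ = (C₃ × C₃) ⋊ C₂`. Put `c = y⁻¹ x y`. Modulo the
relators, `x` and `c` are commuting elements of order dividing 3 which conjugation by `y`
swaps, so every element of the quotient is a word `xⁱ cʲ yᵏ` with `i, j` mod 3 and `k` mod 2.
Since `ρF` sends these 18 words to 18 distinct permutations, the map induced by `ρF` on the
quotient is injective, i.e. its kernel is the normal closure, and the image has order 18.
-/

open Equiv

/-- ρ_F : F₂ → S₆ is determined by ρ_F(x) = (1 2 3) and ρ_F(y) = (1 4)(2 5)(3 6);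
the points 1,…,6 are represented by 0,…,5 in `Fin 6`. -/
def ρF : FreeGroup (Fin 2) →* Equiv.Perm (Fin 6) :=
  FreeGroup.lift ![c[0, 1, 2], c[0, 3] * c[1, 4] * c[2, 5]]

section WreathWord

variable {G H : Type*} [Group G] [Group H]

lemma pow_val_add {n : ℕ} [NeZero n] {g : G} (hg : g ^ n = 1) (i j : ZMod n) :
    g ^ (i + j).val = g ^ i.val * g ^ j.val := by
  rw [ZMod.val_add, ← pow_eq_pow_mod _ hg, pow_add]

def wreathWord (a b : G) (p : ZMod 3 × ZMod 3 × ZMod 2) : G :=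
  a ^ p.1.val * (b⁻¹ * a * b) ^ p.2.1.val * b ^ p.2.2.val

lemma map_wreathWord (φ : G →* H) (a b : G) (p : ZMod 3 × ZMod 3 × ZMod 2) :
    φ (wreathWord a b p) = wreathWord (φ a) (φ b) p := by
  simp only [wreathWord, map_mul, map_pow, map_inv]

variable {a b : G}

lemma mul_wreathWord_left (ha : a ^ 3 = 1) (p : ZMod 3 × ZMod 3 × ZMod 2) :
    a * wreathWord a b p = wreathWord a b (1 + p.1, p.2.1, p.2.2) := by
  simp only [wreathWord, pow_val_add ha, ZMod.val_one, pow_one, mul_assoc]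

lemma mul_wreathWord_right (hb : b ^ 2 = 1) (hab : Commute a (b⁻¹ * a * b))
    (p : ZMod 3 × ZMod 3 × ZMod 2) :
    b * wreathWord a b p = wreathWord a b (p.2.1, p.1, 1 + p.2.2) := by
  have hb' : b⁻¹ = b := inv_eq_of_mul_eq_one_right (by rw [← sq, hb])
  have hconj (n : ℕ) : (b⁻¹ * a * b) ^ n = b⁻¹ * a ^ n * b := by
    simpa using conj_pow (a := b⁻¹) (b := a) (i := n)
  have hba (n : ℕ) : b * a ^ n = (b⁻¹ * a * b) ^ n * b := by
    rw [hconj, mul_assoc _ b, ← sq, hb, mul_one, hb']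
  have hbc (n : ℕ) : b * (b⁻¹ * a * b) ^ n = a ^ n * b := by
    rw [hconj]; group
  simp only [wreathWord, pow_val_add hb, ZMod.val_one, pow_one]
  calc b * (a ^ p.1.val * (b⁻¹ * a * b) ^ p.2.1.val * b ^ p.2.2.val)
      = (b⁻¹ * a * b) ^ p.1.val * (b * (b⁻¹ * a * b) ^ p.2.1.val) * b ^ p.2.2.val := by
        rw [← mul_assoc, ← mul_assoc, hba, mul_assoc _ b]
    _ = a ^ p.2.1.val * (b⁻¹ * a * b) ^ p.1.val * (b * b ^ p.2.2.val) := by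
        rw [hbc, ← mul_assoc, (hab.pow_pow _ _).symm.eq, mul_assoc _ b]

lemma closure_subset_range_wreathWord (ha : a ^ 3 = 1) (hb : b ^ 2 = 1)
    (hab : Commute a (b⁻¹ * a * b)) :
    (Subgroup.closure {a, b} : Set G) ⊆ Set.range (wreathWord a b) := by
  have ha' : a⁻¹ = a * a := inv_eq_of_mul_eq_one_right (by rw [← mul_assoc, ← pow_three', ha])
  have hb' : b⁻¹ = b := inv_eq_of_mul_eq_one_right (by rw [← sq, hb])
  intro g hg
  induction hg using Subgroup.closure_induction_left with
  | one => exact ⟨0, by simp [wreathWord]⟩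
  | mul_left s hs g _ ih =>
    obtain ⟨p, rfl⟩ := ih
    rcases hs with rfl | rfl
    · exact ⟨_, (mul_wreathWord_left ha p).symm⟩
    · exact ⟨_, (mul_wreathWord_right hb hab p).symm⟩
  | inv_mul_cancel s hs g _ ih =>
    obtain ⟨p, rfl⟩ := ih
    rcases hs with rfl | rfl
    · rw [ha', mul_assoc, mul_wreathWord_left ha, mul_wreathWord_left ha]; exact ⟨_, rfl⟩
    · rw [hb', mul_wreathWord_right hb hab]; exact ⟨_, rfl⟩

lemma surjective_wreathWord (hgen : Subgroup.closure {a, b} = ⊤) (ha : a ^ 3 = 1)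
    (hb : b ^ 2 = 1) (hab : Commute a (b⁻¹ * a * b)) : Function.Surjective (wreathWord a b) :=
  fun g => closure_subset_range_wreathWord ha hb hab (hgen ▸ Subgroup.mem_top g)

end WreathWord

lemma MonoidHom.ker_eq_and_card_range_eq {G H ι : Type*} [Group G] [Group H]
    (φ : G →* H) (N : Subgroup G) [N.Normal] (hN : N ≤ φ.ker) (f : ι → G)
    (hsurj : Function.Surjective (QuotientGroup.mk' N ∘ f)) (hinj : Function.Injective (φ ∘ f)) :
    φ.ker = N ∧ Nat.card φ.range = Nat.card ι := by
  have hlift (g : G) : ∃ i, φ g = φ (f i) ∧ (g : G ⧸ N) = f i := by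
    obtain ⟨i, hi⟩ := hsurj g
    refine ⟨i, ?_, hi.symm⟩
    rw [← QuotientGroup.lift_mk (N := N) hN g, ← QuotientGroup.lift_mk (N := N) hN (f i)]
    exact congrArg _ hi.symm
  refine ⟨le_antisymm (fun g hg => ?_) hN, ?_⟩
  · obtain ⟨i, hφ, hπ⟩ := hlift g
    obtain ⟨j, hφ1, hπ1⟩ := hlift 1
    have hij : i = j := hinj <| by
      simp only [Function.comp_apply, ← hφ, ← hφ1, MonoidHom.mem_ker.1 hg, map_one]
    rw [← QuotientGroup.eq_one_iff, hπ, hij, ← hπ1, QuotientGroup.mk_one]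
  · refine (Nat.card_eq_of_bijective (fun i => ⟨φ (f i), f i, rfl⟩) ⟨fun i j h => ?_, ?_⟩).symm
    · exact hinj (congrArg Subtype.val h)
    · rintro ⟨_, g, rfl⟩
      obtain ⟨i, hφ, -⟩ := hlift g
      exact ⟨i, Subtype.ext hφ.symm⟩

lemma ρF_x : ρF x = c[0, 1, 2] := by rw [ρF, x, FreeGroup.lift_apply_of]; rfl

lemma ρF_y : ρF y = c[0, 3] * c[1, 4] * c[2, 5] := by rw [ρF, y, FreeGroup.lift_apply_of]; rfl

set_option maxRecDepth 10000 in
lemma injective_ρF_wreathWord : Function.Injective (ρF ∘ wreathWord x y) := by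
  have : ρF ∘ wreathWord x y = wreathWord c[0, 1, 2] (c[0, 3] * c[1, 4] * c[2, 5]) := by
    funext p; rw [Function.comp_apply, map_wreathWord, ρF_x, ρF_y]
  rw [this]; decide

lemma closure_x_y_eq_top : Subgroup.closure {x, y} = ⊤ := by
  rw [← FreeGroup.closure_range_of]
  congr 1
  ext g; simp [x, y, Fin.exists_fin_two, eq_comm]

def relators : Set (FreeGroup (Fin 2)) :=
  {x ^ 3, y ^ 2, x⁻¹ * (y⁻¹ * x * y)⁻¹ * x * (y⁻¹ * x * y)}

set_option maxRecDepth 10000 in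
lemma normalClosure_relators_le_ker : Subgroup.normalClosure relators ≤ ρF.ker := by
  refine Subgroup.normalClosure_le_normal ?_
  rintro g (rfl | rfl | rfl) <;>
    simp only [SetLike.mem_coe, MonoidHom.mem_ker, map_mul, map_inv, map_pow, ρF_x, ρF_y] <;>
    decide

lemma surjective_mk_wreathWord :
    Function.Surjective (QuotientGroup.mk' (Subgroup.normalClosure relators) ∘ wreathWord x y) := by
  set π := QuotientGroup.mk' (Subgroup.normalClosure relators)
  have hrel (g) (hg : g ∈ relators) : π g = 1 :=
    (QuotientGroup.eq_one_iff g).2 (Subgroup.subset_normalClosure hg)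
  have hgen : Subgroup.closure {π x, π y} = ⊤ := by
    rw [← Set.image_pair, ← MonoidHom.map_closure, closure_x_y_eq_top,
      Subgroup.map_top_of_surjective _ (QuotientGroup.mk'_surjective _)]
  have hab : Commute (π x) ((π y)⁻¹ * π x * π y) := by
    rw [← Commute.inv_inv_iff, ← commutatorElement_eq_one_iff_commute, commutatorElement_def]
    simpa using hrel _ (Or.inr (Or.inr rfl))
  have hsurj := surjective_wreathWord hgen (by simpa using hrel _ (Or.inl rfl))
    (by simpa using hrel _ (Or.inr (Or.inl rfl))) hab
  rwa [← funext (map_wreathWord π x y)] at hsurj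

/-- ker ρ_F is the normal closure of {x³, y², x⁻¹(y⁻¹xy)⁻¹x(y⁻¹xy)} and has index 18 in F₂
(equivalently, the image of ρ_F has order 18). -/
theorem stmt_5 :
    ρF.ker = Subgroup.normalClosure
        {x ^ 3, y ^ 2, x⁻¹ * (y⁻¹ * x * y)⁻¹ * x * (y⁻¹ * x * y)} ∧
      (ρF.ker).index = 18 ∧ Nat.card ρF.range = 18 := by
  obtain ⟨hker, hcard⟩ := ρF.ker_eq_and_card_range_eq _ normalClosure_relators_le_ker _
    surjective_mk_wreathWord injective_ρF_wreathWord
  have h18 : Nat.card ρF.range = 18 := by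
    rw [hcard, Nat.card_prod, Nat.card_prod, Nat.card_zmod, Nat.card_zmod]
  exact ⟨hker, Subgroup.index_ker ρF ▸ h18, h18⟩
end

section
/- The image ρ₀(ker ρ_F) equals the set of even permutations lying in the subgroup of S₁₂ generated by the six pairwise commuting transpositions aᵢ = (i, i+6) for i = 1,…,6; in particular ρ₀(ker ρ_F) is an elementary abelian 2-group of order 2⁵ = 32. -/
open Equiv

/-- The six pairwise commuting transpositions aᵢ = (i, i+6), i = 1,…,6
(the point 12 being represented by `0 : Fin 12`). -/
def A : Set (Equiv.Perm (Fin 12)) :=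
  {Equiv.swap 1 7, Equiv.swap 2 8, Equiv.swap 3 9,
    Equiv.swap 4 10, Equiv.swap 5 11, Equiv.swap 6 0}
/-!
Sort the points of `Fin 12` into the six blocks `{i, i + 6}`. The generators of `ρ₀` permute the
blocks exactly as those of `ρ_F` permute `Fin 6`, and have the same signs, so every element of
`ρ₀(ker ρ_F)` is even and maps each block to itself. The block-preserving permutations are the
`flipBlocks c`, `c ∈ {±1}⁶`, which form the group generated by the `aᵢ`, and
`sign (flipBlocks c) = ∏ cⱼ`. Conversely, the even ones are generated by the five flips of
blocks `j` and `5`, and each of these is the image of an explicit word in `ker ρ_F`.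
-/

open Function

theorem FreeGroup.semiconj_lift {ι α β : Type*} {f : α → β} {g : ι → Perm α} {h : ι → Perm β}
    (hgh : ∀ i, Semiconj f (g i) (h i)) (w : FreeGroup ι) :
    Semiconj f (FreeGroup.lift g w) (FreeGroup.lift h w) := by
  induction w using FreeGroup.induction_on with
  | C1 => exact Semiconj.id_right
  | of i => simpa using hgh i
  | inv_of i hi =>
    rw [_root_.map_inv, _root_.map_inv]
    exact hi.inverses_right (fun _ => by simp) (fun _ => by simp)
  | mul u v hu hv =>
    rw [_root_.map_mul, _root_.map_mul, Perm.coe_mul, Perm.coe_mul]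
    exact hu.comp_right hv

-- The block `{j + 1, j + 7}` gets number `j`, so that `σ₀` and `τ` permute the blocks exactly as
-- `ρ_F x` and `ρ_F y` permute `Fin 6`.
def block (i : Fin 12) : Fin 6 := ⟨(i.val + 5) % 6, Nat.mod_lt _ (by norm_num)⟩

def blockRep (j : Fin 6) : Fin 12 := ⟨j.val + 1, by omega⟩

theorem block_add_six (i : Fin 12) : block (i + 6) = block i := by revert i; decide

theorem add_six_add_six (i : Fin 12) : i + 6 + 6 = i := by revert i; decide

theorem add_six_ne_self (i : Fin 12) : i + 6 ≠ i := by revert i; decide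

theorem block_eq_block_iff {i k : Fin 12} : block k = block i ↔ k = i ∨ k = i + 6 := by
  revert i k; decide

theorem block_blockRep (j : Fin 6) : block (blockRep j) = j := by revert j; decide

theorem eq_blockRep_or (i : Fin 12) : i = blockRep (block i) ∨ i = blockRep (block i) + 6 := by
  revert i; decide

def flipBlocksFun (c : Fin 6 → ℤˣ) (i : Fin 12) : Fin 12 := if c (block i) = 1 then i else i + 6

theorem flipBlocksFun_involutive (c : Fin 6 → ℤˣ) : Involutive (flipBlocksFun c) := by
  intro i
  unfold flipBlocksFun
  split_ifs <;> simp_all [block_add_six, add_six_add_six]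

def flipBlocks : (Fin 6 → ℤˣ) →* Perm (Fin 12) where
  toFun c := (flipBlocksFun_involutive c).toPerm
  map_one' := by ext i; simp [flipBlocksFun]
  map_mul' c d := by
    ext i
    simp only [Involutive.coe_toPerm, Perm.coe_mul, comp_apply, flipBlocksFun, Pi.mul_apply]
    rcases Int.units_eq_one_or (c (block i)) with hc | hc <;>
      rcases Int.units_eq_one_or (d (block i)) with hd | hd <;>
      simp [hc, hd, block_add_six, add_six_add_six]

theorem flipBlocks_apply (c : Fin 6 → ℤˣ) (i : Fin 12) :
    flipBlocks c i = if c (block i) = 1 then i else i + 6 := rfl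

theorem sign_flipBlocks (c : Fin 6 → ℤˣ) : Perm.sign (flipBlocks c) = ∏ j, c j := by
  revert c; decide

theorem flipBlocks_injective : Injective flipBlocks := by
  refine (injective_iff_map_eq_one flipBlocks).2 fun c hc => funext fun j => ?_
  have hfix : flipBlocks c (blockRep j) = blockRep j := by rw [hc, Perm.one_apply]
  rw [flipBlocks_apply, block_blockRep] at hfix
  show c j = 1
  by_contra hcj
  rw [if_neg hcj] at hfix
  exact add_six_ne_self _ hfix

theorem mem_range_flipBlocks {g : Perm (Fin 12)} (hg : ∀ i, block (g i) = block i) :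
    g ∈ flipBlocks.range := by
  have hfib : ∀ i, g i = i ∨ g i = i + 6 := fun i => block_eq_block_iff.1 (hg i)
  have hpartner : ∀ i, g (i + 6) = g i + 6 := by
    intro i
    have hne : g (i + 6) ≠ g i := g.injective.ne (add_six_ne_self i)
    rcases hfib i with hi | hi <;> rcases hfib (i + 6) with hi' | hi' <;>
      simp_all [add_six_add_six]
  have hfix_iff : ∀ i, g i = i ↔ g (blockRep (block i)) = blockRep (block i) := by
    intro i
    rcases eq_blockRep_or i with hi | hi
    · rw [← hi]
    · rw [hi, hpartner, add_left_inj, ← hi]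
  refine ⟨fun j => if g (blockRep j) = blockRep j then 1 else -1, Equiv.ext fun i => ?_⟩
  rcases hfib i with hi | hi <;> simp [flipBlocks_apply, ← hfix_iff, hi]

theorem closure_A_eq_range_flipBlocks : Subgroup.closure A = flipBlocks.range := by
  apply le_antisymm
  · rw [Subgroup.closure_le]
    intro g hg
    apply mem_range_flipBlocks
    simp only [A, Set.mem_insert_iff, Set.mem_singleton_iff] at hg
    rcases hg with rfl | rfl | rfl | rfl | rfl | rfl <;> decide
  · have hA : ∀ j, flipBlocks (Pi.mulSingle j (-1)) ∈ A := by simp only [A]; decide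
    rintro _ ⟨c, rfl⟩
    rw [← Subgroup.mem_comap, ← Finset.univ_prod_mulSingle c]
    refine Subgroup.prod_mem _ fun j _ => ?_
    rcases Int.units_eq_one_or (c j) with hj | hj
    · simp [hj]
    · rw [hj, Subgroup.mem_comap]
      exact Subgroup.subset_closure (hA j)

theorem semiconj_block_rho_zero (w : FreeGroup (Fin 2)) : Semiconj block (ρ 0 w) (ρF w) := by
  refine FreeGroup.semiconj_lift (fun i => ?_) w
  fin_cases i <;> intro k <;> revert k <;> decide

theorem sign_rho_zero (w : FreeGroup (Fin 2)) : Perm.sign (ρ 0 w) = Perm.sign (ρF w) := by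
  suffices Perm.sign.comp (ρ 0) = Perm.sign.comp ρF from DFunLike.congr_fun this w
  refine FreeGroup.ext_hom _ _ fun i => ?_
  fin_cases i <;> decide

theorem map_ker_le_range_flipBlocks : ρF.ker.map (ρ 0) ≤ flipBlocks.range := by
  rintro _ ⟨w, hw, rfl⟩
  refine mem_range_flipBlocks fun i => ?_
  rw [semiconj_block_rho_zero w i, MonoidHom.mem_ker.1 hw, Perm.one_apply]

theorem sign_eq_one_of_mem_map_ker {g : Perm (Fin 12)} (hg : g ∈ ρF.ker.map (ρ 0)) :
    Perm.sign g = 1 := by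
  obtain ⟨w, hw, rfl⟩ := hg
  rw [sign_rho_zero, MonoidHom.mem_ker.1 hw, map_one]

def pairWithLast (j : Fin 5) : Fin 6 → ℤˣ := Pi.mulSingle j.castSucc (-1) * Pi.mulSingle 5 (-1)

theorem eq_prod_pairWithLast {c : Fin 6 → ℤˣ} (hc : ∏ j, c j = 1) :
    c = ∏ j : Fin 5, if c j.castSucc = 1 then 1 else pairWithLast j := by
  revert c; decide

def kernelWord : Fin 5 → FreeGroup (Fin 2) :=
  ![x * y ^ 2 * x⁻¹, x⁻¹ * y ^ 2 * x, y ^ 2, y * x * y ^ 2 * x⁻¹ * y, y * x⁻¹ * y ^ 2 * x * y]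

set_option maxRecDepth 4000 in
theorem kernelWord_mem_ker_and_rho_zero (j : Fin 5) :
    ρF (kernelWord j) = 1 ∧ ρ 0 (kernelWord j) = flipBlocks (pairWithLast j) := by
  have hx : ρ 0 x = σ₀ := by simp [ρ, x, σ]
  have hy : ρ 0 y = τ := by simp [ρ, y]
  have hFx : ρF x = c[0, 1, 2] := by simp [ρF, x]
  have hFy : ρF y = c[0, 3] * c[1, 4] * c[2, 5] := by simp [ρF, y]
  fin_cases j <;>
    simp only [kernelWord, Fin.zero_eta, Fin.mk_one, Fin.reduceFinMk, Matrix.cons_val, map_mul,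
      map_inv, map_pow, hx, hy, hFx, hFy] <;>
    decide

theorem flipBlocks_mem_map_ker {c : Fin 6 → ℤˣ} (hc : ∏ j, c j = 1) :
    flipBlocks c ∈ ρF.ker.map (ρ 0) := by
  rw [← Subgroup.mem_comap, eq_prod_pairWithLast hc]
  refine Subgroup.prod_mem _ fun j _ => ?_
  split_ifs
  · exact one_mem _
  · obtain ⟨hker, hrho⟩ := kernelWord_mem_ker_and_rho_zero j
    exact ⟨kernelWord j, hker, hrho⟩

theorem coe_map_ker_eq_image :
    ((ρF.ker.map (ρ 0) : Subgroup (Perm (Fin 12))) : Set (Perm (Fin 12))) =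
      flipBlocks '' {c | ∏ j, c j = 1} := by
  ext g
  constructor
  · intro hg
    obtain ⟨c, rfl⟩ := map_ker_le_range_flipBlocks hg
    exact ⟨c, (sign_flipBlocks c).symm.trans (sign_eq_one_of_mem_map_ker hg), rfl⟩
  · rintro ⟨c, hc, rfl⟩
    exact flipBlocks_mem_map_ker hc

/-- ρ₀(ker ρ_F) is exactly the set of even permutations in the subgroup generated by the
aᵢ's; in particular it is an elementary abelian 2-group of order 2⁵ = 32. -/
theorem stmt_7 :
    ((ρF.ker.map (ρ 0) : Subgroup (Equiv.Perm (Fin 12))) : Set (Equiv.Perm (Fin 12))) =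
        {g : Equiv.Perm (Fin 12) | g ∈ Subgroup.closure A ∧ Equiv.Perm.sign g = 1} ∧
      Nat.card (ρF.ker.map (ρ 0)) = 32 ∧
      (∀ g ∈ ρF.ker.map (ρ 0), g ^ 2 = 1) ∧
      (∀ g ∈ ρF.ker.map (ρ 0), ∀ h ∈ ρF.ker.map (ρ 0), g * h = h * g) := by
  have hmem : ∀ g, g ∈ ρF.ker.map (ρ 0) ↔ ∃ c, ∏ j, c j = 1 ∧ flipBlocks c = g := fun g =>
    Set.ext_iff.1 coe_map_ker_eq_image g
  refine ⟨?_, ?_, ?_, ?_⟩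
  · ext g
    simp only [SetLike.mem_coe, hmem, Set.mem_ofPred_eq, closure_A_eq_range_flipBlocks,
      MonoidHom.mem_range]
    constructor
    · rintro ⟨c, hc, rfl⟩
      exact ⟨⟨c, rfl⟩, by rw [sign_flipBlocks, hc]⟩
    · rintro ⟨⟨c, rfl⟩, hsign⟩
      exact ⟨c, by rwa [sign_flipBlocks] at hsign, rfl⟩
  · rw [← SetLike.coe_sort_coe, coe_map_ker_eq_image,
      Nat.card_image_of_injective flipBlocks_injective, Nat.card_eq_fintype_card]
    decide
  · intro g hg
    obtain ⟨c, -, rfl⟩ := (hmem g).1 hg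
    rw [← map_pow, show c ^ 2 = 1 from funext fun j => Int.units_sq (c j), map_one]
  · intro g hg h hh
    obtain ⟨c, -, rfl⟩ := (hmem g).1 hg
    obtain ⟨d, -, rfl⟩ := (hmem h).1 hh
    rw [← map_mul, mul_comm, map_mul]
end

section
/- For each i = 0, 1, 2 one has ker ρᵢ ≤ ker ρ_F, i.e., every word in x, y acting trivially in the monodromy of the dessin ℋᵢ also acts trivially in the monodromy of the intermediate dessin ℱ. -/
open Equiv

/-!
The dessin `ℋᵢ` covers `ℱ`: sending the point `k` of `{1,…,12}` to `k mod 6` (in `{1,…,6}`)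
intertwines `ρᵢ(x), ρᵢ(y)` with `ρ_F(x), ρ_F(y)`, hence intertwines `ρᵢ(w)` with `ρ_F(w)` for
every word `w`. If `ρᵢ(w)` is trivial, then `ρ_F(w)` fixes every image point, and the cover is
surjective.
-/

open Function

section Intertwining

variable {G α β : Type*} [Group G] (f : G →* Perm α) (g : G →* Perm β) (p : α → β)

theorem Function.Semiconj.perm_inv {e : Perm α} {e' : Perm β} (h : Semiconj p e e') :
    Semiconj p ⇑e⁻¹ ⇑e'⁻¹ :=
  h.inverses_right e.right_inv e'.left_inv

theorem semiconj_of_closure_eq_top {S : Set G} (hS : Subgroup.closure S = ⊤)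
    (hgen : ∀ s ∈ S, Semiconj p (f s) (g s)) (w : G) : Semiconj p (f w) (g w) := by
  have hw : w ∈ Subgroup.closure S := hS ▸ Subgroup.mem_top w
  induction hw using Subgroup.closure_induction with
  | mem s hs => exact hgen s hs
  | one => simpa only [map_one, Perm.coe_one] using Semiconj.id_right
  | mul u v _ _ hu hv => simpa only [map_mul, Perm.coe_mul] using hu.comp_right hv
  | inv u _ hu => simpa only [map_inv] using hu.perm_inv

theorem ker_le_ker_of_semiconj (hp : Surjective p) (h : ∀ w, Semiconj p (f w) (g w)) :
    f.ker ≤ g.ker := by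
  intro w hw
  rw [MonoidHom.mem_ker] at hw ⊢
  ext b
  obtain ⟨a, rfl⟩ := hp b
  simpa only [hw, Perm.coe_one, id_eq] using (h w a).symm

end Intertwining

/-- The covering map `ℋᵢ → ℱ`, `k ↦ k mod 6`, in the encodings `Fin 12` (`12 ↦ 0`) and
`Fin 6` (`k ↦ k - 1`). -/
def coverF : Fin 12 → Fin 6 := ![5, 0, 1, 2, 3, 4, 5, 0, 1, 2, 3, 4]

theorem coverF_surjective : Surjective coverF := by
  decide

theorem coverF_semiconj_of (i : Fin 3) (j : Fin 2) :
    Semiconj coverF (ρ i (FreeGroup.of j)) (ρF (FreeGroup.of j)) := by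
  simp only [ρ, ρF, FreeGroup.lift_apply_of, Semiconj]
  fin_cases i <;> fin_cases j <;> decide

/-- For each i = 0,1,2 one has ker ρᵢ ≤ ker ρ_F. -/
theorem stmt_8 : ∀ i : Fin 3, (ρ i).ker ≤ ρF.ker := by
  intro i
  refine ker_le_ker_of_semiconj _ _ coverF coverF_surjective ?_
  refine semiconj_of_closure_eq_top _ _ _ (FreeGroup.closure_range_of _) ?_
  rintro _ ⟨j, rfl⟩
  exact coverF_semiconj_of i j
end

section
/- Let K be an algebraically closed field of characteristic 0, let ξ ∈ K be a primitive cube root of unity, and let S = {(u,v) ∈ K × K : u³ + v³ = 2}. The maps f_x(u,v) = (ξu, v) and f_y(u,v) = (v, u) are well-defined bijections of S, and the subgroup of the symmetric group on S generated by f_x and f_y has order 18. -/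
/-- Hom out of `Multiplicative (ZMod n)` determined by an element whose `n`-th power is 1. -/
noncomputable def zmodHom {M : Type*} [Group M] (n : ℕ) (g : M) (h : g ^ n = 1) :
    Multiplicative (ZMod n) →* M :=
  (MulEquiv.multiplicativeAdditive M).toMonoidHom.comp
    (AddMonoidHom.toMultiplicative
      (ZMod.lift n ⟨zmultiplesHom (Additive M) (Additive.ofMul g), by
        simp only [zmultiplesHom_apply]
        rw [← ofMul_zpow]
        simp [h]⟩))

theorem zmodHom_apply {M : Type*} [Group M] (n : ℕ) [NeZero n] (g : M) (h : g ^ n = 1)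
    (m : Multiplicative (ZMod n)) : zmodHom n g h m = g ^ (m.toAdd).val := by
  have hm : ((((m.toAdd).val : ℤ)) : ZMod n) = m.toAdd := by
    push_cast
    exact ZMod.natCast_rightInverse _
  unfold zmodHom
  simp only [MonoidHom.comp_apply, MulEquiv.toMonoidHom_eq_coe, MonoidHom.coe_coe]
  have : m = Multiplicative.ofAdd (((m.toAdd).val : ℤ) : ZMod n) := by
    rw [hm]; rfl
  conv_lhs => rw [this]
  simp only [AddMonoidHom.toMultiplicative_apply_apply, toAdd_ofAdd, ZMod.lift_coe,
    zmultiplesHom_apply]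
  rw [← ofMul_zpow, zpow_natCast]
  rfl

section Curve

variable {K : Type} [Field K]

def fxE (ξ : K) (hξ3 : ξ ^ 3 = 1) : Equiv.Perm {p : K × K // p.1 ^ 3 + p.2 ^ 3 = 2} where
  toFun p := ⟨(ξ * p.1.1, p.1.2), by rw [mul_pow, hξ3, one_mul]; exact p.2⟩
  invFun p := ⟨(ξ ^ 2 * p.1.1, p.1.2), by
    rw [mul_pow, ← pow_mul]
    rw [show (2 * 3 : ℕ) = 3 * 2 by norm_num, pow_mul, hξ3, one_pow, one_mul]
    exact p.2⟩
  left_inv p := Subtype.ext (by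
    show (ξ ^ 2 * (ξ * p.1.1), p.1.2) = p.1
    rw [← mul_assoc, ← pow_succ, hξ3, one_mul])
  right_inv p := Subtype.ext (by
    show (ξ * (ξ ^ 2 * p.1.1), p.1.2) = p.1
    rw [← mul_assoc, ← pow_succ', hξ3, one_mul])

def fyE : Equiv.Perm {p : K × K // p.1 ^ 3 + p.2 ^ 3 = 2} where
  toFun p := ⟨(p.1.2, p.1.1), by rw [add_comm]; exact p.2⟩
  invFun p := ⟨(p.1.2, p.1.1), by rw [add_comm]; exact p.2⟩
  left_inv p := rfl
  right_inv p := rfl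

theorem fxE_apply (ξ : K) (hξ3 : ξ ^ 3 = 1) (p) :
    ((fxE ξ hξ3 p : K × K)) = (ξ * (p : K × K).1, (p : K × K).2) := rfl

theorem fyE_apply (p : {p : K × K // p.1 ^ 3 + p.2 ^ 3 = 2}) :
    ((fyE p : K × K)) = ((p : K × K).2, (p : K × K).1) := rfl

theorem fxE_pow_apply (ξ : K) (hξ3 : ξ ^ 3 = 1) (n : ℕ) : ∀ p,
    (((fxE ξ hξ3 ^ n) p : K × K)) = (ξ ^ n * (p : K × K).1, (p : K × K).2) := by
  induction n with
  | zero => intro p; simp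
  | succ n ih =>
    intro p
    rw [pow_succ, Equiv.Perm.mul_apply, ih, fxE_apply]
    show (ξ ^ n * (ξ * (p : K × K).1), (p : K × K).2) = _
    rw [Prod.mk.injEq]
    exact ⟨by ring, rfl⟩


def gyE (ξ : K) (hξ3 : ξ ^ 3 = 1) : Equiv.Perm {p : K × K // p.1 ^ 3 + p.2 ^ 3 = 2} :=
  fyE * fxE ξ hξ3 * fyE⁻¹

theorem fyE_inv : (fyE : Equiv.Perm {p : K × K // p.1 ^ 3 + p.2 ^ 3 = 2})⁻¹ = fyE := rfl

theorem gyE_apply (ξ : K) (hξ3 : ξ ^ 3 = 1) (p) :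
    ((gyE ξ hξ3 p : K × K)) = ((p : K × K).1, ξ * (p : K × K).2) := rfl

theorem gyE_pow_apply (ξ : K) (hξ3 : ξ ^ 3 = 1) (n : ℕ) : ∀ p,
    (((gyE ξ hξ3 ^ n) p : K × K)) = ((p : K × K).1, ξ ^ n * (p : K × K).2) := by
  induction n with
  | zero => intro p; simp
  | succ n ih =>
    intro p
    rw [pow_succ, Equiv.Perm.mul_apply, ih, gyE_apply]
    show ((p : K × K).1, ξ ^ n * (ξ * (p : K × K).2)) = _
    rw [Prod.mk.injEq]
    exact ⟨rfl, by ring⟩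

theorem hfx3 (ξ : K) (hξ3 : ξ ^ 3 = 1) : fxE ξ hξ3 ^ 3 = 1 :=
  Equiv.ext fun p => Subtype.ext (by rw [fxE_pow_apply, hξ3, one_mul]; rfl)

theorem hgy3 (ξ : K) (hξ3 : ξ ^ 3 = 1) : gyE ξ hξ3 ^ 3 = 1 :=
  Equiv.ext fun p => Subtype.ext (by rw [gyE_pow_apply, hξ3, one_mul]; rfl)

theorem hfy2 : (fyE : Equiv.Perm {p : K × K // p.1 ^ 3 + p.2 ^ 3 = 2}) ^ 2 = 1 := by
  rw [sq]
  exact Equiv.ext fun p => Subtype.ext rfl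

theorem fx_gy_comm (ξ : K) (hξ3 : ξ ^ 3 = 1) : Commute (fxE ξ hξ3) (gyE ξ hξ3) :=
  Equiv.ext fun p => Subtype.ext rfl

theorem conj_fy_gy (ξ : K) (hξ3 : ξ ^ 3 = 1) : fyE * gyE ξ hξ3 * fyE⁻¹ = fxE ξ hξ3 :=
  Equiv.ext fun p => Subtype.ext rfl

noncomputable def homx (ξ : K) (hξ3 : ξ ^ 3 = 1) :
    Multiplicative (ZMod 3) →* Equiv.Perm {p : K × K // p.1 ^ 3 + p.2 ^ 3 = 2} :=
  zmodHom 3 (fxE ξ hξ3) (hfx3 ξ hξ3)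

noncomputable def homgy (ξ : K) (hξ3 : ξ ^ 3 = 1) :
    Multiplicative (ZMod 3) →* Equiv.Perm {p : K × K // p.1 ^ 3 + p.2 ^ 3 = 2} :=
  zmodHom 3 (gyE ξ hξ3) (hgy3 ξ hξ3)

noncomputable def homfy (K : Type) [Field K] :
    Multiplicative (ZMod 2) →* Equiv.Perm {p : K × K // p.1 ^ 3 + p.2 ^ 3 = 2} :=
  zmodHom 2 fyE hfy2

noncomputable def fnH (ξ : K) (hξ3 : ξ ^ 3 = 1) :
    Multiplicative (ZMod 3) × Multiplicative (ZMod 3) →*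
      Equiv.Perm {p : K × K // p.1 ^ 3 + p.2 ^ 3 = 2} :=
  (homx ξ hξ3).noncommCoprod (homgy ξ hξ3) (by
    intro a b
    show Commute (zmodHom 3 (fxE ξ hξ3) (hfx3 ξ hξ3) a) (zmodHom 3 (gyE ξ hξ3) (hgy3 ξ hξ3) b)
    rw [zmodHom_apply, zmodHom_apply]
    exact (fx_gy_comm ξ hξ3).pow_pow _ _)

end Curve

abbrev NN : Type := Multiplicative (ZMod 3) × Multiplicative (ZMod 3)
abbrev HH : Type := Multiplicative (ZMod 2)

def σN : MulAut NN := MulEquiv.prodComm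

theorem hσ2 : σN ^ 2 = 1 := by
  rw [sq]
  exact MulEquiv.ext fun x => rfl

noncomputable def ψH : HH →* MulAut NN := zmodHom 2 σN hσ2

theorem fnH_apply {K : Type} [Field K] (ξ : K) (hξ3 : ξ ^ 3 = 1) (x y : Multiplicative (ZMod 3)) :
    fnH ξ hξ3 (x, y) = fxE ξ hξ3 ^ (x.toAdd).val * gyE ξ hξ3 ^ (y.toAdd).val := by
  show homx ξ hξ3 x * homgy ξ hξ3 y = _
  rw [homx, homgy, zmodHom_apply, zmodHom_apply]

theorem compatH {K : Type} [Field K] (ξ : K) (hξ3 : ξ ^ 3 = 1) (g : HH) :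
    (fnH ξ hξ3).comp (ψH g).toMonoidHom =
      (MulAut.conj (homfy K g)).toMonoidHom.comp (fnH ξ hξ3) := by
  refine MonoidHom.ext fun n => ?_
  obtain ⟨a, b⟩ := n
  simp only [MonoidHom.comp_apply, MulEquiv.coe_toMonoidHom, MulAut.conj_apply]
  have hψ : ψH g = σN ^ (g.toAdd).val := zmodHom_apply _ _ _ g
  have hfy : homfy K g = fyE ^ (g.toAdd).val := zmodHom_apply _ _ _ g
  have hv := ZMod.val_lt (g.toAdd)
  rcases (by omega : (Multiplicative.toAdd g).val = 0 ∨ (Multiplicative.toAdd g).val = 1) with h0 | h1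
  · rw [hψ, hfy, h0, pow_zero, pow_zero]
    simp
  · rw [hψ, hfy, h1, pow_one, pow_one]
    show fnH ξ hξ3 (σN (a, b)) = fyE * fnH ξ hξ3 (a, b) * fyE⁻¹
    have hσab : σN (a, b) = (b, a) := rfl
    rw [hσab, fnH_apply, fnH_apply]
    have h1 : fyE * (fxE ξ hξ3 ^ (a.toAdd).val * gyE ξ hξ3 ^ (b.toAdd).val) * fyE⁻¹
        = (fyE * fxE ξ hξ3 * fyE⁻¹) ^ (a.toAdd).val
          * (fyE * gyE ξ hξ3 * fyE⁻¹) ^ (b.toAdd).val := by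
      rw [← MulAut.conj_apply, map_mul, map_pow, map_pow]
      simp [MulAut.conj_apply]
    rw [h1, conj_fy_gy, show fyE * fxE ξ hξ3 * fyE⁻¹ = gyE ξ hξ3 from rfl]
    exact (fx_gy_comm ξ hξ3).pow_pow _ _

noncomputable def φH {K : Type} [Field K] (ξ : K) (hξ3 : ξ ^ 3 = 1) :
    (NN ⋊[ψH] HH) →* Equiv.Perm {p : K × K // p.1 ^ 3 + p.2 ^ 3 = 2} :=
  SemidirectProduct.lift (fnH ξ hξ3) (homfy K) (compatH ξ hξ3)

theorem φH_apply' {K : Type} [Field K] (ξ : K) (hξ3 : ξ ^ 3 = 1) (ab : NN) (e : HH) :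
    φH ξ hξ3 ⟨ab, e⟩ = fnH ξ hξ3 ab * homfy K e := by
  conv_lhs => rw [show (⟨ab, e⟩ : NN ⋊[ψH] HH)
    = SemidirectProduct.inl ab * SemidirectProduct.inr e from
      (SemidirectProduct.inl_left_mul_inr_right _).symm]
  rw [map_mul,
    show φH ξ hξ3 = SemidirectProduct.lift (fnH ξ hξ3) (homfy K) (compatH ξ hξ3) from rfl,
    SemidirectProduct.lift_inl, SemidirectProduct.lift_inr]

theorem eval0 {K : Type} [Field K] (ξ : K) (hξ3 : ξ ^ 3 = 1) (A B : ℕ)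
    (p : {p : K × K // p.1 ^ 3 + p.2 ^ 3 = 2}) :
    (((fxE ξ hξ3 ^ A * gyE ξ hξ3 ^ B) p : K × K))
      = (ξ ^ A * (p : K × K).1, ξ ^ B * (p : K × K).2) := by
  rw [Equiv.Perm.mul_apply, fxE_pow_apply, gyE_pow_apply]

theorem eval1 {K : Type} [Field K] (ξ : K) (hξ3 : ξ ^ 3 = 1) (A B : ℕ)
    (p : {p : K × K // p.1 ^ 3 + p.2 ^ 3 = 2}) :
    (((fxE ξ hξ3 ^ A * gyE ξ hξ3 ^ B * (fyE (K := K))) p : K × K))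
      = (ξ ^ A * (p : K × K).2, ξ ^ B * (p : K × K).1) := by
  rw [Equiv.Perm.mul_apply, eval0, fyE_apply]


theorem φH_injective {K : Type} [Field K] [IsAlgClosed K] [CharZero K] (ξ : K)
    (hξ3 : ξ ^ 3 = 1) (hξ : IsPrimitiveRoot ξ 3) : Function.Injective (φH ξ hξ3) := by
  rw [injective_iff_map_eq_one]
  intro g hg
  obtain ⟨c, hc⟩ := IsAlgClosed.exists_pow_nat_eq (2 : K) (by norm_num : 0 < 3)
  have hc0 : c ≠ 0 := by rintro rfl; norm_num at hc
  obtain ⟨⟨a, b⟩, e⟩ := g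
  rw [φH_apply', fnH_apply, show homfy K e = fyE ^ (e.toAdd).val from zmodHom_apply _ _ _ e] at hg
  set A := (a.toAdd).val with hA
  set B := (b.toAdd).val with hB
  have p2 : {p : K × K // p.1 ^ 3 + p.2 ^ 3 = 2} := ⟨(c, 0), by simp [hc]⟩
  have q2 : {p : K × K // p.1 ^ 3 + p.2 ^ 3 = 2} := ⟨(0, c), by simp [hc]⟩
  have hev := ZMod.val_lt (e.toAdd)
  rcases (by omega : (e.toAdd).val = 0 ∨ (e.toAdd).val = 1) with h0 | h1
  · rw [h0, pow_zero, mul_one] at hg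
    have hga := congrArg (fun f : Equiv.Perm {p : K × K // p.1 ^ 3 + p.2 ^ 3 = 2} =>
      ((f ⟨(c, 0), by simp [hc]⟩ : K × K)).1) hg
    simp only [eval0, Equiv.Perm.one_apply] at hga
    have hgb := congrArg (fun f : Equiv.Perm {p : K × K // p.1 ^ 3 + p.2 ^ 3 = 2} =>
      ((f ⟨(0, c), by simp [hc]⟩ : K × K)).2) hg
    simp only [eval0, Equiv.Perm.one_apply] at hgb
    -- hga : ξ ^ A * c = c, hgb : ξ ^ B * c = c
    have hA0 : ξ ^ A = 1 := by
      have := mul_right_cancel₀ hc0 (by rw [hga, one_mul] : ξ ^ A * c = 1 * c)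
      exact this
    have hB0 : ξ ^ B = 1 := by
      exact mul_right_cancel₀ hc0 (by rw [hgb, one_mul] : ξ ^ B * c = 1 * c)
    have hAdvd := (hξ.pow_eq_one_iff_dvd A).mp hA0
    have hBdvd := (hξ.pow_eq_one_iff_dvd B).mp hB0
    have hAlt := ZMod.val_lt (a.toAdd)
    have hBlt := ZMod.val_lt (b.toAdd)
    have ha : a = 1 := Multiplicative.toAdd.injective (by
      have h' : (a.toAdd).val = 0 := by omega
      simpa using (ZMod.val_eq_zero _).mp h')
    have hb : b = 1 := Multiplicative.toAdd.injective (by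
      have h' : (b.toAdd).val = 0 := by omega
      simpa using (ZMod.val_eq_zero _).mp h')
    have he : e = 1 := Multiplicative.toAdd.injective (by
      simpa using (ZMod.val_eq_zero _).mp h0)
    rw [ha, hb, he]
    rfl
  · exfalso
    rw [h1, pow_one] at hg
    have hga := congrArg (fun f : Equiv.Perm {p : K × K // p.1 ^ 3 + p.2 ^ 3 = 2} =>
      ((f ⟨(c, 0), by simp [hc]⟩ : K × K)).1) hg
    simp only [eval1, Equiv.Perm.one_apply] at hga
    -- hga : ξ ^ A * 0 = c
    rw [mul_zero] at hga
    exact hc0 hga.symm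

theorem range_φH {K : Type} [Field K] (ξ : K) (hξ3 : ξ ^ 3 = 1) :
    (φH ξ hξ3).range = Subgroup.closure {fxE ξ hξ3, fyE} := by
  apply le_antisymm
  · rintro x ⟨g, rfl⟩
    obtain ⟨⟨a, b⟩, e⟩ := g
    rw [φH_apply', fnH_apply, show homfy K e = fyE ^ (e.toAdd).val from zmodHom_apply _ _ _ e]
    have hfx : fxE ξ hξ3 ∈ Subgroup.closure {fxE ξ hξ3, fyE} :=
      Subgroup.subset_closure (Set.mem_insert _ _)
    have hfy : fyE ∈ Subgroup.closure {fxE ξ hξ3, fyE} :=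
      Subgroup.subset_closure (Set.mem_insert_of_mem _ rfl)
    have hgy : gyE ξ hξ3 ∈ Subgroup.closure {fxE ξ hξ3, fyE} :=
      mul_mem (mul_mem hfy hfx) (inv_mem hfy)
    exact mul_mem (mul_mem (pow_mem hfx _) (pow_mem hgy _)) (pow_mem hfy _)
  · rw [Subgroup.closure_le]
    rintro x hx
    simp only [Set.mem_insert_iff, Set.mem_singleton_iff] at hx
    rcases hx with rfl | rfl
    · refine ⟨⟨(Multiplicative.ofAdd 1, 1), 1⟩, ?_⟩
      rw [φH_apply', fnH_apply, show (homfy K) (1 : HH) = 1 from map_one _, mul_one,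
        show ((Multiplicative.ofAdd (1 : ZMod 3)).toAdd).val = 1 from rfl,
        show (((1 : Multiplicative (ZMod 3))).toAdd).val = 0 from rfl,
        pow_one, pow_zero, mul_one]
    · refine ⟨⟨1, Multiplicative.ofAdd 1⟩, ?_⟩
      rw [φH_apply', show fnH ξ hξ3 (1 : NN) = 1 from map_one _, one_mul,
        show homfy K (Multiplicative.ofAdd 1) = fyE ^ ((Multiplicative.ofAdd (1 : ZMod 2)).toAdd).val
          from zmodHom_apply _ _ _ _]
      rw [show ((Multiplicative.ofAdd (1 : ZMod 2)).toAdd).val = 1 from rfl, pow_one]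

theorem card_G : Nat.card (NN ⋊[ψH] HH) = 18 := by
  have e : (NN ⋊[ψH] HH) ≃ NN × HH :=
    ⟨fun g => (g.left, g.right), fun p => ⟨p.1, p.2⟩, fun g => rfl, fun p => rfl⟩
  rw [Nat.card_congr e]
  simp [Nat.card_eq_fintype_card]

/-- Let K be an algebraically closed field of characteristic 0, ξ a primitive cube root
of unity, and S = {(u,v) ∈ K² : u³ + v³ = 2}. The maps f_x(u,v) = (ξu, v) and
f_y(u,v) = (v, u) are well-defined bijections of S, and the subgroup of the symmetric
group on S that they generate has order 18. -/
theorem stmt_16 (K : Type) [Field K] [IsAlgClosed K] [CharZero K]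
    (ξ : K) (hξ : IsPrimitiveRoot ξ 3) :
    ∃ fx fy : Equiv.Perm {p : K × K // p.1 ^ 3 + p.2 ^ 3 = 2},
      (∀ p, ((fx p : K × K)) = (ξ * (p : K × K).1, (p : K × K).2)) ∧
      (∀ p, ((fy p : K × K)) = ((p : K × K).2, (p : K × K).1)) ∧
      Nat.card (Subgroup.closure {fx, fy} :
        Subgroup (Equiv.Perm {p : K × K // p.1 ^ 3 + p.2 ^ 3 = 2})) = 18 := by
  have hξ3 : ξ ^ 3 = 1 := hξ.pow_eq_one
  refine ⟨fxE ξ hξ3, fyE, fxE_apply ξ hξ3, fyE_apply, ?_⟩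
  rw [← range_φH ξ hξ3,
    ← Nat.card_congr (MonoidHom.ofInjective (φH_injective ξ hξ3 hξ)).toEquiv]
  exact card_G
end
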